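/- In the coalescent-walk process Z associated with a plane walk with increments in A, the y-coordinates of coalescent points are non-negative: if t < t' and ℓ = min{k ≥ t' : Z^{(t)}_k = Z^{(t')}_k} exists, then Z^{(t)}_ℓ ≥ 0. -/

import Mathlib

/-- The set A of admissible increments: (+1,-1) together with (-i,+j) for i,j ≥ 0. -/
def AdmissibleSteps : Set (ℤ × ℤ) :=
  {((1 : ℤ), (-1 : ℤ))} ∪ {p : ℤ × ℤ | p.1 ≤ 0 ∧ 0 ≤ p.2}

/-!
Both trajectories follow the same one-step rule `coalescentStep`, driven by the same increment
`(a, b)` of the walk, and they differ just before meeting. A jump to `b` needs `a < 0`, hence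
`b ≥ 0`. Two trajectories that both stay negative move by the same translation `z ↦ z - a`, so
they cannot meet. A nonnegative `z` moves to `z + b`, which is negative only for `z = 0` and the
step `(1, -1)`, giving `-1`; a negative `z'` then moves to `z' - 1 ≤ -2`.
-/

/-- Maps `Z^{(t)}_{k-1}` to `Z^{(t)}_k` when the walk makes the step `(a, b)` at time `k`. -/
def coalescentStep (a b z : ℤ) : ℤ :=
  if 0 ≤ z then z + b else if z - a < 0 then z - a else b

theorem eq_coalescentStep {a b z w : ℤ}
    (h : (0 ≤ z → w = z + b) ∧ (z < 0 → z - a < 0 → w = z - a) ∧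
      (z < 0 → 0 ≤ z - a → w = b)) :
    w = coalescentStep a b z := by
  obtain ⟨hpos, hneg, hjump⟩ := h
  unfold coalescentStep
  split_ifs with hz hza
  · exact hpos hz
  · exact hneg (not_le.mp hz) hza
  · exact hjump (not_le.mp hz) (not_lt.mp hza)

theorem coalescentStep_nonneg_of_eq_of_ne {a b z z' : ℤ} (hab : (a, b) ∈ AdmissibleSteps)
    (hne : z ≠ z') (heq : coalescentStep a b z = coalescentStep a b z') :
    0 ≤ coalescentStep a b z := by
  simp only [AdmissibleSteps, Set.mem_union, Set.mem_singleton_iff, Set.mem_ofPred_eq,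
    Prod.mk.injEq] at hab
  unfold coalescentStep at *
  split_ifs at * <;> omega

/-- In the coalescent-walk process associated with a plane walk with increments in A,
the y-coordinates of coalescent points are non-negative: if t < t' and ℓ is the first
time ≥ t' at which the trajectories started at t and t' meet, then their common value
at time ℓ is ≥ 0. -/
theorem coalescent_point_nonneg
    (I : Set ℤ) (hI : I.OrdConnected) (X Y : ℤ → ℤ)
    (hinc : ∀ k ∈ I, (k - 1) ∈ I → (X k - X (k - 1), Y k - Y (k - 1)) ∈ AdmissibleSteps)
    (Z : ℤ → ℤ → ℤ)
    (hstart : ∀ t ∈ I, Z t t = 0)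
    (hrec : ∀ t ∈ I, ∀ k ∈ I, t < k →
      (0 ≤ Z t (k - 1) → Z t k = Z t (k - 1) + (Y k - Y (k - 1))) ∧
      (Z t (k - 1) < 0 → Z t (k - 1) - (X k - X (k - 1)) < 0 →
        Z t k = Z t (k - 1) - (X k - X (k - 1))) ∧
      (Z t (k - 1) < 0 → 0 ≤ Z t (k - 1) - (X k - X (k - 1)) →
        Z t k = Y k - Y (k - 1)))
    (t : ℤ) (ht : t ∈ I) (t' : ℤ) (ht' : t' ∈ I) (htt' : t < t')
    (ℓ : ℤ) (hℓ : ℓ ∈ I) (hℓt' : t' ≤ ℓ)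
    (hmeet : Z t ℓ = Z t' ℓ)
    (hfirst : ∀ k, t' ≤ k → k < ℓ → Z t k ≠ Z t' k) :
    0 ≤ Z t ℓ := by
  rcases hℓt'.eq_or_lt with rfl | hlt
  · rw [hmeet, hstart t' ht']
  have hprev : ℓ - 1 ∈ I := hI.out ht' hℓ ⟨by omega, by omega⟩
  have hstep := eq_coalescentStep (hrec t ht ℓ hℓ (htt'.trans hlt))
  have hstep' := eq_coalescentStep (hrec t' ht' ℓ hℓ hlt)
  rw [hstep] at hmeet ⊢
  rw [hstep'] at hmeet
  exact coalescentStep_nonneg_of_eq_of_ne (hinc ℓ hℓ hprev)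
    (hfirst (ℓ - 1) (by omega) (by omega)) hmeet
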